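/- arXiv:1003.2043 — 4 statements merged into one kernel-verified Lean document; each statement's English description precedes it below -/
import Mathlib

section
/- Let x : ℝ → ℝ³ be a curve lying on an oriented surface S in Minkowski 3-space, parametrized by arc length, with Darboux frame (T, g, n) where both S and x are timelike, satisfying T' = k_g·g - k_n·n, g' = k_g·T + τ_g·n, n' = k_n·T + τ_g·g. If x₁ : ℝ → ℝ³ is another curve with Darboux frame (T₁, g₁, n₁) and x(s₁) = x₁(s₁) + λ(s₁)·n₁(s₁) for a smooth function λ, and if at every point the vector g(s₁) is parallel to n₁(s₁), then λ' = 0, i.e. λ is constant. -/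
noncomputable section

open Real

/-- Minkowski inner product on ℝ³: ⟨u,v⟩ = -u₁v₁ + u₂v₂ + u₃v₃. -/
def mink (u v : Fin 3 → ℝ) : ℝ := -(u 0 * v 0) + u 1 * v 1 + u 2 * v 2

/-- Lorentzian cross product on Minkowski 3-space. -/
def lcross (u v : Fin 3 → ℝ) : Fin 3 → ℝ :=
  ![u 1 * v 2 - u 2 * v 1, u 0 * v 2 - u 2 * v 0, u 1 * v 0 - u 0 * v 1]

/- The derivative of the offset curve x = x₁ + λ n₁ is x₁' + λ n₁' + λ' n₁, and the first two
terms are orthogonal to the unit vector n₁; so λ' = ⟨x', n₁⟩. Since g ∥ n₁ and T ⟂ g, the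
tangent T of x, hence x' = σ T, is orthogonal to n₁. -/

@[simp]
lemma mink_add_left (u v w : Fin 3 → ℝ) : mink (u + v) w = mink u w + mink v w := by
  simp only [mink, Pi.add_apply]; ring

@[simp]
lemma mink_smul_left (a : ℝ) (u v : Fin 3 → ℝ) : mink (a • u) v = a * mink u v := by
  simp only [mink, Pi.smul_apply, smul_eq_mul]; ring

@[simp]
lemma mink_smul_right (a : ℝ) (u v : Fin 3 → ℝ) : mink u (a • v) = a * mink u v := by
  simp only [mink, Pi.smul_apply, smul_eq_mul]; ring

lemma mink_eq_zero_of_mink_smul_eq_zero {u v : Fin 3 → ℝ} {c : ℝ} (hc : c ≠ 0)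
    (h : mink u (c • v) = 0) : mink u v = 0 := by
  rw [mink_smul_right] at h
  exact (mul_eq_zero.mp h).resolve_left hc

lemma hasDerivAt_offset_eq_mink {x x₁ n₁ : ℝ → Fin 3 → ℝ} {lam : ℝ → ℝ}
    {v v₁ w : Fin 3 → ℝ} {l s : ℝ} (hx : ∀ t, x t = x₁ t + lam t • n₁ t)
    (hxd : HasDerivAt x v s) (hx₁d : HasDerivAt x₁ v₁ s) (hn₁d : HasDerivAt n₁ w s)
    (hlam : HasDerivAt lam l s) (hv₁ : mink v₁ (n₁ s) = 0) (hw : mink w (n₁ s) = 0)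
    (hn₁n₁ : mink (n₁ s) (n₁ s) = 1) : l = mink v (n₁ s) := by
  have hoffset : HasDerivAt x (v₁ + (lam s • w + l • n₁ s)) s :=
    (hx₁d.add (hlam.smul hn₁d)).congr_of_eventuallyEq (.of_forall hx)
  rw [hxd.unique hoffset]
  simp [hv₁, hw, hn₁n₁]

theorem mannheim_lambda_constant_general
    (x x₁ T T₁ g g₁ n₁ : ℝ → Fin 3 → ℝ)
    (lam kn₁ τg₁ σ : ℝ → ℝ)
    (hx : ∀ s, x s = x₁ s + lam s • n₁ s)
    (hlam : Differentiable ℝ lam)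
    -- Darboux frame of x₁ (derivatives w.r.t. s₁)
    (hx₁d : ∀ s, HasDerivAt x₁ (T₁ s) s)
    (hn₁d : ∀ s, HasDerivAt n₁ (kn₁ s • T₁ s + τg₁ s • g₁ s) s)
    -- Darboux frame of x (timelike curve on a timelike surface), chain rule with σ = ds/ds₁
    (hxd : ∀ s, HasDerivAt x (σ s • T s) s)
    -- metric relations
    (hTg : ∀ s, mink (T s) (g s) = 0)
    (hT₁n₁ : ∀ s, mink (T₁ s) (n₁ s) = 0)
    (hg₁n₁ : ∀ s, mink (g₁ s) (n₁ s) = 0)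
    (hn₁n₁ : ∀ s, mink (n₁ s) (n₁ s) = 1)
    -- g is parallel to n₁ at every point
    (hpar : ∀ s, ∃ c : ℝ, c ≠ 0 ∧ g s = c • n₁ s) :
    ∀ s, deriv lam s = 0 := by
  intro s
  obtain ⟨c, hc, hg⟩ := hpar s
  have hTn₁ : mink (T s) (n₁ s) = 0 :=
    mink_eq_zero_of_mink_smul_eq_zero hc (hg ▸ hTg s)
  have hn₁'n₁ : mink (kn₁ s • T₁ s + τg₁ s • g₁ s) (n₁ s) = 0 := by
    simp [hT₁n₁ s, hg₁n₁ s]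
  rw [hasDerivAt_offset_eq_mink hx (hxd s) (hx₁d s) (hn₁d s) (hlam s).hasDerivAt
    (hT₁n₁ s) hn₁'n₁ (hn₁n₁ s)]
  simp [hTn₁]

/-- If x = x₁ + λ·n₁ with the Darboux frame vector g of x parallel to n₁,
then λ is constant (λ' = 0).  Everything is parametrized by the arc length s₁ of x₁;
x has arc length s with ds/ds₁ = σ. -/
theorem mannheim_lambda_constant
    (x x₁ T T₁ g g₁ n n₁ : ℝ → Fin 3 → ℝ)
    (lam kg kn τg kn₁ τg₁ σ : ℝ → ℝ)
    (hx : ∀ s, x s = x₁ s + lam s • n₁ s)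
    (hlam : Differentiable ℝ lam)
    -- Darboux frame of x₁ (derivatives w.r.t. s₁)
    (hx₁d : ∀ s, HasDerivAt x₁ (T₁ s) s)
    (hn₁d : ∀ s, HasDerivAt n₁ (kn₁ s • T₁ s + τg₁ s • g₁ s) s)
    -- Darboux frame of x (timelike curve on a timelike surface), chain rule with σ = ds/ds₁
    (hxd : ∀ s, HasDerivAt x (σ s • T s) s)
    (hTd : ∀ s, HasDerivAt T (σ s • (kg s • g s - kn s • n s)) s)
    (hgd : ∀ s, HasDerivAt g (σ s • (kg s • T s + τg s • n s)) s)
    (hnd : ∀ s, HasDerivAt n (σ s • (kn s • T s + τg s • g s)) s)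
    -- metric relations
    (hTg : ∀ s, mink (T s) (g s) = 0)
    (hTT : ∀ s, mink (T s) (T s) = -1)
    (hgg : ∀ s, mink (g s) (g s) = 1)
    (hnn : ∀ s, mink (n s) (n s) = 1)
    (hT₁n₁ : ∀ s, mink (T₁ s) (n₁ s) = 0)
    (hg₁n₁ : ∀ s, mink (g₁ s) (n₁ s) = 0)
    (hn₁n₁ : ∀ s, mink (n₁ s) (n₁ s) = 1)
    -- g is parallel to n₁ at every point
    (hpar : ∀ s, ∃ c : ℝ, c ≠ 0 ∧ g s = c • n₁ s) :
    ∀ s, deriv lam s = 0 :=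
  mannheim_lambda_constant_general x x₁ T T₁ g g₁ n₁ lam kn₁ τg₁ σ hx hlam hx₁d hn₁d hxd hTg hT₁n₁
    hg₁n₁ hn₁n₁ hpar
end
end

section
/- Let (x, x₁) be a Mannheim D-pair of type 1 in Minkowski 3-space with x(s₁) = x₁(s₁) + λ·n₁(s₁) for a nonzero constant λ, and let θ be the hyperbolic angle between T and T₁ with tanh θ = λτ_{g₁}/(1+λk_{n₁}) and dθ/ds₁ = k_n·(ds/ds₁) - k_{g₁}. Then the geodesic torsion τ_{g₁} of x₁ satisfies the differential equation τ_{g₁}' = (1/λ)·[ (((1+λk_{n₁})² - λ²τ_{g₁}²)/(1+λk_{n₁})) · ( k_n·(1+λk_{n₁})/cosh θ - k_{g₁} ) + λ²·τ_{g₁}·k_{n₁}'/(1+λk_{n₁}) ], where primes denote d/ds₁. -/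
noncomputable section

open Real

/-! Since `λ ≠ 0`, the relation `tanh θ = λτ_{g₁}/(1 + λk_{n₁})` determines the geodesic torsion
as `τ_{g₁} = tanh θ · (1 + λk_{n₁}) / λ`. Differentiating this with `tanh' = 1 - tanh²`, then
substituting `dθ/ds₁ = k_n (1 + λk_{n₁}) / cosh θ - k_{g₁}` and `tanh θ` once more, gives the
equation. -/

theorem Real.hasDerivAt_tanh (x : ℝ) : HasDerivAt tanh (1 - tanh x ^ 2) x := by
  have hcosh : cosh x ≠ 0 := (cosh_pos x).ne'
  have hquot := (hasDerivAt_sinh x).div (hasDerivAt_cosh x) hcosh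
  rw [show sinh / cosh = tanh from funext fun y => (tanh_eq_sinh_div_cosh y).symm] at hquot
  refine hquot.congr_deriv ?_
  rw [tanh_eq_sinh_div_cosh]
  field_simp

theorem HasDerivAt.tanh {f : ℝ → ℝ} {f' x : ℝ} (hf : HasDerivAt f f' x) :
    HasDerivAt (fun t => Real.tanh (f t)) ((1 - Real.tanh (f x) ^ 2) * f') x :=
  (Real.hasDerivAt_tanh (f x)).comp x hf

theorem mannheim_type1_characterization_general
    (kn₁ τg₁ kg₁ kn θ σ : ℝ → ℝ) (lam : ℝ) (hlam : lam ≠ 0)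
    (hdk : Differentiable ℝ kn₁) (hdθ : Differentiable ℝ θ)
    (hne : ∀ s, 1 + lam * kn₁ s ≠ 0)
    (htanh : ∀ s, Real.tanh (θ s) = lam * τg₁ s / (1 + lam * kn₁ s))
    (hθ' : ∀ s, deriv θ s = kn s * σ s - kg₁ s)
    (hσ : ∀ s, σ s = (1 + lam * kn₁ s) / Real.cosh (θ s)) :
    ∀ s, deriv τg₁ s =
      (1 / lam) * ((((1 + lam * kn₁ s) ^ 2 - lam ^ 2 * (τg₁ s) ^ 2) / (1 + lam * kn₁ s)) *
          (kn s * (1 + lam * kn₁ s) / Real.cosh (θ s) - kg₁ s)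
        + lam ^ 2 * τg₁ s * deriv kn₁ s / (1 + lam * kn₁ s)) := by
  intro s
  have hτ : τg₁ = fun t => Real.tanh (θ t) * (1 + lam * kn₁ t) / lam := by
    funext t
    rw [htanh t]
    field_simp [hne t]
  have hderiv : HasDerivAt τg₁
      (((1 - Real.tanh (θ s) ^ 2) * deriv θ s * (1 + lam * kn₁ s)
        + Real.tanh (θ s) * (lam * deriv kn₁ s)) / lam) s := by
    rw [hτ]
    exact (((hdθ s).hasDerivAt.tanh).mul
      (((hdk s).hasDerivAt.const_mul lam).const_add 1)).div_const lam
  have hcosh : Real.cosh (θ s) ≠ 0 := (cosh_pos (θ s)).ne'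
  have hden := hne s
  rw [hderiv.deriv, htanh s, hθ' s, hσ s]
  field_simp

/-- The characterization ODE for the geodesic torsion of a Mannheim partner D-curve
of type 1 (primes denote d/ds₁). -/
theorem mannheim_type1_characterization
    (kn₁ τg₁ kg₁ kn θ σ : ℝ → ℝ) (lam : ℝ) (hlam : lam ≠ 0)
    (hdk : Differentiable ℝ kn₁) (hdτ : Differentiable ℝ τg₁) (hdθ : Differentiable ℝ θ)
    (hne : ∀ s, 1 + lam * kn₁ s ≠ 0)
    (htanh : ∀ s, Real.tanh (θ s) = lam * τg₁ s / (1 + lam * kn₁ s))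
    (hθ' : ∀ s, deriv θ s = kn s * σ s - kg₁ s)
    (hσ : ∀ s, σ s = (1 + lam * kn₁ s) / Real.cosh (θ s)) :
    ∀ s, deriv τg₁ s =
      (1 / lam) * ((((1 + lam * kn₁ s) ^ 2 - lam ^ 2 * (τg₁ s) ^ 2) / (1 + lam * kn₁ s)) *
          (kn s * (1 + lam * kn₁ s) / Real.cosh (θ s) - kg₁ s)
        + lam ^ 2 * τg₁ s * deriv kn₁ s / (1 + lam * kn₁ s)) :=
  mannheim_type1_characterization_general kn₁ τg₁ kg₁ kn θ σ lam hlam hdk hdθ hne htanh hθ' hσ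
end
end

section
/- Let (x, x₁) be a Mannheim D-pair of type 1 in Minkowski 3-space with x = x₁ + λn₁, λ ≠ 0 constant, and ds/ds₁ = λτ_{g₁}/sinh θ. Then from τ_{g₁} = -τ_g·(ds/ds₁)² it follows that τ_g·τ_{g₁} = -sinh²θ/λ². -/
noncomputable section

open Real

/-- Corollary 4.2 (ii): from ds/ds₁ = λτ_{g₁}/sinh θ and τ_{g₁} = -τ_g·(ds/ds₁)²,
one gets τ_g·τ_{g₁} = -sinh²θ/λ². -/
theorem mannheim_type1_torsion_sinh
    (τg τg₁ σ θ : ℝ → ℝ) (lam : ℝ) (hlam : lam ≠ 0)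
    (hσ : ∀ s, σ s = lam * τg₁ s / Real.sinh (θ s))
    (hσ0 : ∀ s, σ s ≠ 0)
    (hsinh : ∀ s, Real.sinh (θ s) ≠ 0)
    (hrel : ∀ s, τg₁ s = -(τg s) * (σ s) ^ 2) :
    ∀ s, τg s * τg₁ s = -(Real.sinh (θ s)) ^ 2 / lam ^ 2 := by
  intro s
  have hτ₁ : τg₁ s ≠ 0 := by
    intro h
    apply hσ0 s
    rw [hσ s, h, mul_zero, zero_div]
  have hσs := hσ s
  have hrels := hrel s
  have hs := hsinh s
  have hσ0s := hσ0 s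
  rw [hσs] at hrels hσ0s
  field_simp at hrels
  -- hrels : τg₁ s * sinh (θ s) ^ 2 = -(τg s) * (lam * τg₁ s) ^ 2  (or similar)
  field_simp
  have key := mul_left_cancel₀ hτ₁ (show τg₁ s * (Real.sinh (θ s) ^ 2) =
      τg₁ s * (-(τg s * τg₁ s * lam ^ 2)) by linear_combination (τg₁ s) * hrels)
  linarith [key]
end
end

section
/- Let (x, x₁) be a Mannheim D-pair of type 5 in Minkowski 3-space (x spacelike on a timelike surface S, x₁ spacelike on a spacelike surface S₁, g of x parallel to n₁ of x₁), with x = x₁ + λn₁ for a nonzero constant λ, and θ the spacelike angle between T and T₁ with T = cos θ·T₁ + sin θ·g₁ and ds/ds₁ = (1+λk_{n₁})/cos θ = λτ_{g₁}/sin θ. Then τ_{g₁}' = (1/λ)·[ (((1+λk_{n₁})² + λ²τ_{g₁}²)/(1+λk_{n₁})) · ( -k_n·(1+λk_{n₁})/cos θ - k_{g₁} ) + λ²τ_{g₁}k_{n₁}'/(1+λk_{n₁}) ], with primes denoting d/ds₁. -/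
/-!
Differentiating `tan θ = λτ_{g₁} / (1 + λk_{n₁})` and using `1 / cos² θ = 1 + tan² θ` gives
`θ' ((1 + λk_{n₁})² + λ²τ_{g₁}²) = λτ_{g₁}' (1 + λk_{n₁}) - λ²τ_{g₁} k_{n₁}'`,
which is solved for `τ_{g₁}'` after substituting `θ' = -k_n (1 + λk_{n₁}) / cos θ - k_{g₁}`.
-/

noncomputable section

open Real

open Filter Topology in
theorem deriv_mul_sq_add_sq_of_tan_eq_div {θ f g : ℝ → ℝ} {t : ℝ}
    (hθ : DifferentiableAt ℝ θ t) (hf : DifferentiableAt ℝ f t) (hg : DifferentiableAt ℝ g t)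
    (hcos : cos (θ t) ≠ 0) (hgt : g t ≠ 0)
    (htan : (fun s => tan (θ s)) =ᶠ[𝓝 t] fun s => f s / g s) :
    deriv θ t * (g t ^ 2 + f t ^ 2) = deriv f t * g t - f t * deriv g t := by
  have hchain : HasDerivAt (fun s => tan (θ s)) (1 / cos (θ t) ^ 2 * deriv θ t) t :=
    (hasDerivAt_tan hcos).comp t hθ.hasDerivAt
  have hquot : HasDerivAt (fun s => tan (θ s))
      ((deriv f t * g t - f t * deriv g t) / g t ^ 2) t :=
    (hf.hasDerivAt.div hg.hasDerivAt hgt).congr_of_eventuallyEq htan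
  have hsec : 1 / cos (θ t) ^ 2 = (g t ^ 2 + f t ^ 2) / g t ^ 2 := by
    rw [one_div, ← inv_one_add_tan_sq hcos, inv_inv, htan.eq_of_nhds]
    field_simp
  have h := hchain.unique hquot
  rw [hsec] at h
  field_simp at h
  linear_combination h

theorem mannheim_type5_characterization_general
    (kn₁ τg₁ kg₁ kn θ σ : ℝ → ℝ) (lam : ℝ) (hlam : lam ≠ 0)
    (hdk : Differentiable ℝ kn₁) (hdτ : Differentiable ℝ τg₁) (hdθ : Differentiable ℝ θ)
    (hne : ∀ t, 1 + lam * kn₁ t ≠ 0)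
    (hcos : ∀ t, Real.cos (θ t) ≠ 0)
    (htan : ∀ t, Real.tan (θ t) = lam * τg₁ t / (1 + lam * kn₁ t))
    (hθ' : ∀ t, deriv θ t = -(kn t) * σ t - kg₁ t)
    (hσ1 : ∀ t, σ t = (1 + lam * kn₁ t) / Real.cos (θ t)) :
    ∀ t, deriv τg₁ t =
      (1 / lam) * ((((1 + lam * kn₁ t) ^ 2 + lam ^ 2 * (τg₁ t) ^ 2) / (1 + lam * kn₁ t)) *
          (-(kn t) * (1 + lam * kn₁ t) / Real.cos (θ t) - kg₁ t)
        + lam ^ 2 * τg₁ t * deriv kn₁ t / (1 + lam * kn₁ t)) := by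
  intro t
  have hdiff := deriv_mul_sq_add_sq_of_tan_eq_div (hdθ t) ((hdτ t).const_mul lam)
    (((hdk t).const_mul lam).const_add 1) (hcos t) (hne t) (Filter.Eventually.of_forall htan)
  rw [deriv_const_add, deriv_const_mul _ (hdτ t), deriv_const_mul _ (hdk t), hθ' t, hσ1 t]
    at hdiff
  have hk := hne t
  field_simp
  linear_combination -hdiff

/-- Theorem 4.1 (iii): the characterization ODE for a Mannheim D-pair of type 5
(spacelike angle θ, tan θ = λτ_{g₁}/(1+λk_{n₁})). -/
theorem mannheim_type5_characterization
    (T T₁ g₁ : ℝ → Fin 3 → ℝ)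
    (kn₁ τg₁ kg₁ kn θ σ : ℝ → ℝ) (lam : ℝ) (hlam : lam ≠ 0)
    (hdk : Differentiable ℝ kn₁) (hdτ : Differentiable ℝ τg₁) (hdθ : Differentiable ℝ θ)
    (hne : ∀ t, 1 + lam * kn₁ t ≠ 0)
    (hcos : ∀ t, Real.cos (θ t) ≠ 0)
    (hT : ∀ t, T t = Real.cos (θ t) • T₁ t + Real.sin (θ t) • g₁ t)
    (htan : ∀ t, Real.tan (θ t) = lam * τg₁ t / (1 + lam * kn₁ t))
    (hθ' : ∀ t, deriv θ t = -(kn t) * σ t - kg₁ t)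
    (hσ1 : ∀ t, σ t = (1 + lam * kn₁ t) / Real.cos (θ t))
    (hσ2 : ∀ t, σ t = lam * τg₁ t / Real.sin (θ t)) :
    ∀ t, deriv τg₁ t =
      (1 / lam) * ((((1 + lam * kn₁ t) ^ 2 + lam ^ 2 * (τg₁ t) ^ 2) / (1 + lam * kn₁ t)) *
          (-(kn t) * (1 + lam * kn₁ t) / Real.cos (θ t) - kg₁ t)
        + lam ^ 2 * τg₁ t * deriv kn₁ t / (1 + lam * kn₁ t)) :=
  mannheim_type5_characterization_general kn₁ τg₁ kg₁ kn θ σ lam hlam hdk hdτ hdθ hne hcos htan hθ'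
    hσ1
end
end
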